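/- arXiv:1202.0619 — 3 statements merged into one kernel-verified Lean document; each statement's English description precedes it below -/
import Mathlib

section
/- Let c ≥ 0 and F a nonnegative measure on ℝ with c + ∫ x² dF(x) = 1. Define δ(u) = iuc + ∫ x(e^{iux} - 1) dF(x) for u ∈ ℝ. Then |δ(u)|² ≤ 2(u²c + 4∫ sin²(ux/2) dF(x)) and in particular |δ(u)| ≤ 2√2 (1 + |u|). -/
open Complex Real MeasureTheory

/-! By Cauchy–Schwarz and `|e^{it} - 1| = 2 |sin (t / 2)|`, the jump part of `δ(u)` has squared
norm at most `(∫ x² dF) · 4 ∫ sin²(ux/2) dF`, and `(a + b)² ≤ 2 (a² + b²)` together with `c ≤ 1`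
gives the first bound. Since `4 sin²(ux/2) ≤ u² x²`, its right-hand side is at most
`2 u² (c + ∫ x² dF) = 2 u²`. -/

theorem norm_integral_mul_sq_le {α 𝕜 : Type*} [MeasurableSpace α] {μ : Measure α} [RCLike 𝕜]
    {f g : α → 𝕜} (hf : MemLp f 2 μ) (hg : MemLp g 2 μ) :
    ‖∫ a, f a * g a ∂μ‖ ^ 2 ≤ (∫ a, ‖f a‖ ^ 2 ∂μ) * ∫ a, ‖g a‖ ^ 2 ∂μ := by
  have holder := integral_mul_norm_le_Lp_mul_Lq (μ := μ) (f := f) (g := g)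
    Real.HolderConjugate.two_two (by simpa using hf) (by simpa using hg)
  simp only [Real.rpow_two, ← Real.sqrt_eq_rpow] at holder
  have hnorm : ‖∫ a, f a * g a ∂μ‖ ≤ ∫ a, ‖f a‖ * ‖g a‖ ∂μ := by
    simpa only [norm_mul] using norm_integral_le_integral_norm (fun a => f a * g a)
  calc ‖∫ a, f a * g a ∂μ‖ ^ 2 ≤ (√(∫ a, ‖f a‖ ^ 2 ∂μ) * √(∫ a, ‖g a‖ ^ 2 ∂μ)) ^ 2 := by
        gcongr
        exact hnorm.trans holder
    _ = (∫ a, ‖f a‖ ^ 2 ∂μ) * ∫ a, ‖g a‖ ^ 2 ∂μ := by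
        rw [mul_pow, Real.sq_sqrt (integral_nonneg fun a => by positivity),
          Real.sq_sqrt (integral_nonneg fun a => by positivity)]

theorem norm_integral_mul_cexp_sub_one_sq_le (F : Measure ℝ) (u : ℝ)
    (hF2 : Integrable (fun x => x ^ 2) F) (hsin : Integrable (fun x => Real.sin (u * x / 2) ^ 2) F) :
    ‖∫ x, (x : ℂ) * (cexp (I * u * x) - 1) ∂F‖ ^ 2
      ≤ (∫ x, x ^ 2 ∂F) * (4 * ∫ x, Real.sin (u * x / 2) ^ 2 ∂F) := by
  have hexp : ∀ x : ℝ, ‖cexp (I * u * x) - 1‖ ^ 2 = 4 * Real.sin (u * x / 2) ^ 2 := fun x => by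
    rw [mul_assoc, ← ofReal_mul, norm_exp_I_mul_ofReal_sub_one, Real.norm_eq_abs, sq_abs]
    ring
  have hid : ∀ x : ℝ, ‖(x : ℂ)‖ ^ 2 = x ^ 2 := fun x => by rw [norm_real, Real.norm_eq_abs, sq_abs]
  have hmem_id : MemLp (fun x : ℝ => (x : ℂ)) 2 F :=
    (memLp_two_iff_integrable_sq_norm (by fun_prop)).2 (by simpa only [hid] using hF2)
  have hmem_exp : MemLp (fun x : ℝ => cexp (I * u * x) - 1) 2 F :=
    (memLp_two_iff_integrable_sq_norm (by fun_prop)).2 (by simpa only [hexp] using hsin.const_mul 4)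
  simpa only [hid, hexp, integral_const_mul] using norm_integral_mul_sq_le hmem_id hmem_exp

theorem four_mul_integral_sin_sq_le (F : Measure ℝ) (u : ℝ)
    (hF2 : Integrable (fun x => x ^ 2) F) (hsin : Integrable (fun x => Real.sin (u * x / 2) ^ 2) F) :
    4 * ∫ x, Real.sin (u * x / 2) ^ 2 ∂F ≤ u ^ 2 * ∫ x, x ^ 2 ∂F := by
  rw [← integral_const_mul, ← integral_const_mul]
  refine integral_mono (hsin.const_mul 4) (hF2.const_mul _) fun x => ?_
  have := Real.sin_sq_le_sq (x := u * x / 2)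
  dsimp only
  linarith [show (u * x / 2) ^ 2 = u ^ 2 * x ^ 2 / 4 by ring]

theorem stmt4_general (c : ℝ) (hc : 0 ≤ c) (F : Measure ℝ)
    (hF2 : Integrable (fun x => x ^ 2) F)
    (hsum : c + ∫ x, x ^ 2 ∂F = 1) (u : ℝ)
    (hsin : Integrable (fun x => Real.sin (u * x / 2) ^ 2) F) :
    ‖Complex.I * u * c + ∫ x, (x : ℂ) * (Complex.exp (Complex.I * u * x) - 1) ∂F‖ ^ 2
      ≤ 2 * (u ^ 2 * c + 4 * ∫ x, Real.sin (u * x / 2) ^ 2 ∂F) ∧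
    ‖Complex.I * u * c + ∫ x, (x : ℂ) * (Complex.exp (Complex.I * u * x) - 1) ∂F‖
      ≤ 2 * Real.sqrt 2 * (1 + |u|) := by
  have hB := norm_integral_mul_cexp_sub_one_sq_le F u hF2 hsin
  have hS_le := four_mul_integral_sin_sq_le F u hF2 hsin
  set B := ∫ x, (x : ℂ) * (cexp (I * u * x) - 1) ∂F
  set S := ∫ x, Real.sin (u * x / 2) ^ 2 ∂F
  set m := ∫ x, x ^ 2 ∂F
  have hm : 0 ≤ m := integral_nonneg fun x => sq_nonneg x
  have hS : 0 ≤ S := integral_nonneg fun x => sq_nonneg _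
  have hdrift : ‖I * u * c‖ = |u| * c := by
    rw [norm_mul, norm_mul, norm_I, norm_real, norm_real, Real.norm_eq_abs, Real.norm_eq_abs,
      abs_of_nonneg hc, one_mul]
  have hfirst : ‖I * u * c + B‖ ^ 2 ≤ 2 * (u ^ 2 * c + 4 * S) :=
    calc ‖I * u * c + B‖ ^ 2 ≤ (|u| * c + ‖B‖) ^ 2 := by
          gcongr; exact hdrift ▸ norm_add_le _ _
      _ ≤ 2 * ((|u| * c) ^ 2 + ‖B‖ ^ 2) := add_sq_le
      _ ≤ 2 * (u ^ 2 * c + 4 * S) := by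
          have hc2 : u ^ 2 * c ^ 2 ≤ u ^ 2 * c := by gcongr; exact sq_le hc (by linarith)
          have hB4 : ‖B‖ ^ 2 ≤ 4 * S := by nlinarith
          rw [mul_pow, sq_abs]
          linarith
  refine ⟨hfirst, ?_⟩
  have hquad : ‖I * u * c + B‖ ^ 2 ≤ 2 * u ^ 2 := by nlinarith
  have hsq : ‖I * u * c + B‖ ^ 2 ≤ (2 * √2 * (1 + |u|)) ^ 2 := by
    rw [mul_pow, mul_pow, Real.sq_sqrt zero_le_two]
    nlinarith [abs_nonneg u, sq_abs u]
  exact (pow_le_pow_iff_left₀ (norm_nonneg _) (by positivity) two_ne_zero).1 hsq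

theorem stmt4 (c : ℝ) (hc : 0 ≤ c) (F : Measure ℝ)
    (hF2 : Integrable (fun x => x ^ 2) F)
    (hsum : c + ∫ x, x ^ 2 ∂F = 1) (u : ℝ)
    (hInt : Integrable (fun x : ℝ => (x : ℂ) * (Complex.exp (Complex.I * u * x) - 1)) F)
    (hsin : Integrable (fun x => Real.sin (u * x / 2) ^ 2) F) :
    ‖Complex.I * u * c + ∫ x, (x : ℂ) * (Complex.exp (Complex.I * u * x) - 1) ∂F‖ ^ 2
      ≤ 2 * (u ^ 2 * c + 4 * ∫ x, Real.sin (u * x / 2) ^ 2 ∂F) ∧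
    ‖Complex.I * u * c + ∫ x, (x : ℂ) * (Complex.exp (Complex.I * u * x) - 1) ∂F‖
      ≤ 2 * Real.sqrt 2 * (1 + |u|) :=
  stmt4_general c hc F hF2 hsum u hsin
end

section
/- If X is a square-integrable process with independent increments satisfying the structure condition, and X_b - X_a is deterministic (almost surely constant) for some 0 ≤ a < b ≤ T, then X_u = X_a almost surely for every u ∈ [a, b]. -/
/-!
Both the mean and the variance of an increment are measured by `dv`. A deterministic increment
`X_b - X_a` has variance `v b - v a = 0`, so the increasing function `v` is constant on `[a, b]`
and `dv` does not charge `(a, u]`. Then `X_u - X_a` has variance `v u - v a = 0` and, by the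
structure condition, mean `∫_{(a, u]} α dv = 0`, hence it vanishes almost surely.
-/

open MeasureTheory ProbabilityTheory

namespace ProbabilityTheory

variable {Ω : Type*} {m0 : MeasurableSpace Ω} {μ : Measure Ω} {X : Ω → ℝ}

lemma variance_eq_zero_of_ae_eq_const [IsProbabilityMeasure μ] {c : ℝ}
    (h : X =ᵐ[μ] fun _ => c) : Var[X; μ] = 0 := by
  rw [variance_congr h]
  simp [variance, evariance]

lemma ae_eq_zero_of_integral_eq_zero_of_variance_eq_zero [IsFiniteMeasure μ] (hX : MemLp X 2 μ)
    (hmean : μ[X] = 0) (hvar : Var[X; μ] = 0) : X =ᵐ[μ] 0 := by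
  filter_upwards [ae_eq_integral_of_variance_eq_zero hX hvar] with ω hω
  rw [hω, hmean, Pi.zero_apply]

end ProbabilityTheory

theorem stmt10_general {Ω : Type*} {m0 : MeasurableSpace Ω} (μ : Measure Ω) [IsProbabilityMeasure μ]
    (X : ℝ → Ω → ℝ) (T a b : ℝ)
    (hL2 : ∀ t, MemLp (X t) 2 μ)
    -- mean and variance functions of the PII:  E[X_t - X_s] = m t - m s,
    -- Var(X_t - X_s) = v t - v s (v is increasing and right continuous)
    (m : ℝ → ℝ) (v : StieltjesFunction ℝ)
    (hmean : ∀ s t : ℝ, s ≤ t → ∫ ω, (X t ω - X s ω) ∂μ = m t - m s)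
    (hvar : ∀ s t : ℝ, s ≤ t → variance (fun ω => X t ω - X s ω) μ = v t - v s)
    -- structure condition: dm ≪ dv with square integrable density α
    (hSC : ∃ α : ℝ → ℝ,
      (∀ s t : ℝ, s ≤ t → m t - m s = ∫ r in Set.Ioc s t, α r ∂v.measure) ∧
      IntegrableOn (fun r => (α r) ^ 2) (Set.Ioc 0 T) v.measure)
    -- the increment X_b - X_a is deterministic
    (hdet : ∃ c : ℝ, (fun ω => X b ω - X a ω) =ᵐ[μ] fun _ => c) :
    ∀ u ∈ Set.Icc a b, X u =ᵐ[μ] X a := by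
  rintro u ⟨hau, hub⟩
  obtain ⟨c, hc⟩ := hdet
  obtain ⟨α, hα, -⟩ := hSC
  have hv_ab : v b = v a := by
    linarith [hvar a b (hau.trans hub), variance_eq_zero_of_ae_eq_const hc]
  have hv_au : v u = v a := le_antisymm (hv_ab ▸ v.mono hub) (v.mono hau)
  have hnull : v.measure (Set.Ioc a u) = 0 := by simp [v.measure_Ioc, hv_au]
  have hmean_au : ∫ ω, (X u ω - X a ω) ∂μ = 0 := by
    rw [hmean a u hau, hα a u hau, setIntegral_measure_zero _ hnull]
  have hvar_au : Var[fun ω => X u ω - X a ω; μ] = 0 := by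
    rw [hvar a u hau, hv_au, sub_self]
  filter_upwards [ae_eq_zero_of_integral_eq_zero_of_variance_eq_zero
    ((hL2 u).sub (hL2 a)) hmean_au hvar_au] with ω hω
  exact sub_eq_zero.mp hω

theorem stmt10 {Ω : Type*} {m0 : MeasurableSpace Ω} (μ : Measure Ω) [IsProbabilityMeasure μ]
    (X : ℝ → Ω → ℝ) (T a b : ℝ) (ha : 0 ≤ a) (hab : a < b) (hbT : b ≤ T)
    (hmeas : ∀ t, Measurable (X t))
    (hL2 : ∀ t, MemLp (X t) 2 μ)
    -- mean and variance functions of the PII:  E[X_t - X_s] = m t - m s,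
    -- Var(X_t - X_s) = v t - v s (v is increasing and right continuous)
    (m : ℝ → ℝ) (v : StieltjesFunction ℝ)
    (hmean : ∀ s t : ℝ, s ≤ t → ∫ ω, (X t ω - X s ω) ∂μ = m t - m s)
    (hvar : ∀ s t : ℝ, s ≤ t → variance (fun ω => X t ω - X s ω) μ = v t - v s)
    -- structure condition: dm ≪ dv with square integrable density α
    (hSC : ∃ α : ℝ → ℝ,
      (∀ s t : ℝ, s ≤ t → m t - m s = ∫ r in Set.Ioc s t, α r ∂v.measure) ∧
      IntegrableOn (fun r => (α r) ^ 2) (Set.Ioc 0 T) v.measure)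
    -- the increment X_b - X_a is deterministic
    (hdet : ∃ c : ℝ, (fun ω => X b ω - X a ω) =ᵐ[μ] fun _ => c) :
    ∀ u ∈ Set.Icc a b, X u =ᵐ[μ] X a :=
  stmt10_general (m0 := m0) μ X T a b hL2 m v hmean hvar hSC hdet
end

section
/- Let X be a square-integrable process with independent increments and μ a finite complex measure on ℝ. Define f(x) = ∫ e^{iux} dμ(u) and ε_{t,T}(u) = exp(Ψ_T(u) - Ψ_t(u)). Then for all t ∈ [0,T], E[f(X_T) | F_t] = e_{t,T}(X_t) almost surely, where e_{t,T}(x) = ∫ e^{iux} ε_{t,T}(u) dμ(u). -/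
/-!
For a fixed frequency `u`, `exp (i u X_T) = exp (i u X_t) * exp (i u (X_T - X_t))` and the second
factor is independent of `ℱ t`, so on every `ℱ t`-measurable set `s` the integral of
`exp (i u X_T)` is `ε_{t,T}(u)` times that of `exp (i u X_t)`. Integrating against `ρ dν` and
exchanging the two integrals (the integrands are bounded by `‖ρ‖`) shows that `f (X_T)` and the
`ℱ t`-measurable `e_{t,T}(X_t)` have the same integral over every such `s`.
-/

open Complex MeasureTheory ProbabilityTheory

section ParametricIntegral

variable {α β : Type*} {mα : MeasurableSpace α} {mβ : MeasurableSpace β}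
  {μ : Measure α} {ν : Measure β} {ρ : β → ℂ} {F : α → β → ℂ}

lemma stronglyMeasurable_integral_mul [SFinite ν] (hF : StronglyMeasurable (Function.uncurry F))
    (hρ : AEStronglyMeasurable ρ ν) :
    StronglyMeasurable fun x => ∫ u, F x u * ρ u ∂ν := by
  have hmk : (fun x => ∫ u, F x u * ρ u ∂ν) = fun x => ∫ u, F x u * hρ.mk ρ u ∂ν :=
    funext fun x => integral_congr_ae (hρ.ae_eq_mk.mono fun u hu => by simp only [hu])
  rw [hmk]
  exact (hF.mul (hρ.stronglyMeasurable_mk.comp_measurable measurable_snd)).integral_prod_right'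

lemma integrable_integral_mul [IsFiniteMeasure μ] [SFinite ν]
    (hF : StronglyMeasurable (Function.uncurry F)) (hF_le : ∀ x u, ‖F x u‖ ≤ 1)
    (hρ : Integrable ρ ν) :
    Integrable (fun x => ∫ u, F x u * ρ u ∂ν) μ := by
  refine .of_bound (stronglyMeasurable_integral_mul hF hρ.1).aestronglyMeasurable
    (∫ u, ‖ρ u‖ ∂ν) (.of_forall fun x =>
      norm_integral_le_of_norm_le hρ.norm (.of_forall fun u => ?_))
  simpa [norm_mul] using mul_le_of_le_one_left (norm_nonneg _) (hF_le x u)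

lemma integral_integral_mul_swap [IsFiniteMeasure μ] [SFinite ν]
    (hF : StronglyMeasurable (Function.uncurry F)) (hF_le : ∀ x u, ‖F x u‖ ≤ 1)
    (hρ : Integrable ρ ν) :
    ∫ x, ∫ u, F x u * ρ u ∂ν ∂μ = ∫ u, (∫ x, F x u ∂μ) * ρ u ∂ν := by
  have hint : Integrable (fun p : α × β => Function.uncurry F p * ρ p.2) (μ.prod ν) := by
    simpa using ((integrable_const (1 : ℂ)).mul_prod hρ).bdd_mul hF.aestronglyMeasurable
      (.of_forall fun p => hF_le p.1 p.2)
  simp_rw [integral_integral_swap (f := fun x u => F x u * ρ u) hint, integral_mul_const]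

end ParametricIntegral

lemma norm_exp_I_mul_ofReal_mul_ofReal (u x : ℝ) : ‖exp (I * u * x)‖ = 1 := by
  simpa [mul_assoc] using norm_exp_I_mul_ofReal (u * x)

section Independence

variable {Ω : Type*} {m m0 : MeasurableSpace Ω} {μ : Measure Ω} {Y Z : Ω → ℝ}

lemma charFun_map_eq_integral_exp (hZ : AEMeasurable Z μ) (u : ℝ) :
    charFun (μ.map Z) u = ∫ ω, exp (I * u * Z ω) ∂μ := by
  rw [charFun_apply_real, integral_map hZ (by fun_prop)]
  simp only [mul_comm, mul_left_comm]

lemma setIntegral_exp_add_of_indep (hm : m ≤ m0) (hY : Measurable[m] Y) (hZ : Measurable Z)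
    (hindep : Indep (MeasurableSpace.comap Z inferInstance) m μ) {s : Set Ω}
    (hs : MeasurableSet[m] s) (u : ℝ) :
    ∫ ω in s, exp (I * u * (Y ω + Z ω : ℝ)) ∂μ
      = charFun (μ.map Z) u * ∫ ω in s, exp (I * u * Y ω) ∂μ := by
  have hexp : Measurable fun x : ℝ => exp (I * u * x) := by fun_prop
  have hYs : Measurable[m] (s.indicator fun ω => exp (I * u * Y ω)) :=
    (hexp.comp hY).indicator hs
  have hind :
      IndepFun (fun ω => exp (I * u * Z ω)) (s.indicator fun ω => exp (I * u * Y ω)) μ := by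
    rw [IndepFun_iff_Indep]
    exact indep_of_indep_of_le_right
      (indep_of_indep_of_le_left hindep (hexp.comp (comap_measurable Z)).comap_le) hYs.comap_le
  calc ∫ ω in s, exp (I * u * (Y ω + Z ω : ℝ)) ∂μ
      = ∫ ω, exp (I * u * Z ω) * s.indicator (fun ω => exp (I * u * Y ω)) ω ∂μ := by
        rw [← integral_indicator (hm s hs)]
        congr 1 with ω
        by_cases hω : ω ∈ s
        · simp only [Set.indicator_of_mem hω, ← exp_add, ofReal_add]
          ring_nf
        · simp [Set.indicator_of_notMem hω]
    _ = _ := by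
        rw [hind.integral_fun_mul_eq_mul_integral (hexp.comp hZ).aestronglyMeasurable
          (hYs.mono hm le_rfl).aestronglyMeasurable, integral_indicator (hm s hs),
          charFun_map_eq_integral_exp hZ.aemeasurable]

theorem condExp_integral_exp_add_of_indep [IsProbabilityMeasure μ] (hm : m ≤ m0)
    (hY : Measurable[m] Y) (hZ : Measurable Z)
    (hindep : Indep (MeasurableSpace.comap Z inferInstance) m μ)
    {ν : Measure ℝ} [SFinite ν] {ρ : ℝ → ℂ} (hρ : Integrable ρ ν) :
    μ[fun ω => ∫ u, exp (I * u * (Y ω + Z ω : ℝ)) * ρ u ∂ν | m]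
      =ᵐ[μ] fun ω => ∫ u, exp (I * u * Y ω) * charFun (μ.map Z) u * ρ u ∂ν := by
  have : IsProbabilityMeasure (μ.map Z) := Measure.isProbabilityMeasure_map hZ.aemeasurable
  have hY0 : Measurable Y := hY.mono hm le_rfl
  have hF : StronglyMeasurable
      (Function.uncurry fun ω (u : ℝ) => exp (I * u * (Y ω + Z ω : ℝ))) :=
    (by fun_prop :
      Measurable fun p : Ω × ℝ => exp (I * p.2 * (Y p.1 + Z p.1 : ℝ))).stronglyMeasurable
  have hF_le : ∀ (ω : Ω) (u : ℝ), ‖exp (I * u * (Y ω + Z ω : ℝ))‖ ≤ 1 :=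
    fun ω u => (norm_exp_I_mul_ofReal_mul_ofReal u _).le
  have hG : StronglyMeasurable (Function.uncurry fun (x u : ℝ) =>
      exp (I * u * x) * charFun (μ.map Z) u) :=
    ((by fun_prop : Measurable fun p : ℝ × ℝ => exp (I * p.2 * p.1)).mul
      (measurable_charFun.comp measurable_snd)).stronglyMeasurable
  have hGY : StronglyMeasurable (Function.uncurry fun ω (u : ℝ) =>
      exp (I * u * Y ω) * charFun (μ.map Z) u) :=
    ((by fun_prop : Measurable fun p : Ω × ℝ => exp (I * p.2 * Y p.1)).mul
      (measurable_charFun.comp measurable_snd)).stronglyMeasurable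
  have hGY_le : ∀ (ω : Ω) (u : ℝ), ‖exp (I * u * Y ω) * charFun (μ.map Z) u‖ ≤ 1 :=
    fun ω u => by simpa [norm_exp_I_mul_ofReal_mul_ofReal] using norm_charFun_le_one u
  refine (ae_eq_condExp_of_forall_setIntegral_eq hm
    (integrable_integral_mul hF hF_le hρ)
    (fun s _ _ => (integrable_integral_mul hGY hGY_le hρ).integrableOn)
    (fun s hs _ => ?_)
    ((stronglyMeasurable_integral_mul hG hρ.1).comp_measurable hY).aestronglyMeasurable).symm
  rw [integral_integral_mul_swap hGY hGY_le hρ, integral_integral_mul_swap hF hF_le hρ]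
  congr 1 with u
  rw [setIntegral_exp_add_of_indep hm hY hZ hindep hs, integral_mul_const]
  ring

end Independence

theorem stmt11_general {Ω : Type*} {m0 : MeasurableSpace Ω} (μ : Measure Ω) [IsProbabilityMeasure μ]
    (ℱ : Filtration ℝ m0) (X : ℝ → Ω → ℝ) (Ψ : ℝ → ℝ → ℂ) (T : ℝ)
    (hadapted : Adapted ℱ X)
    (hindep : ∀ s t : ℝ, s ≤ t →
      Indep (MeasurableSpace.comap (fun ω => X t ω - X s ω) inferInstance) (ℱ s) μ)
    (hcharInc : ∀ s t : ℝ, s ≤ t → ∀ u : ℝ,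
      ∫ ω, Complex.exp (Complex.I * u * (X t ω - X s ω)) ∂μ
        = Complex.exp (Ψ t u - Ψ s u))
    -- H = f(X_T) with f the Fourier transform of a finite complex measure ρ dν
    (ν : Measure ℝ) [IsFiniteMeasure ν] (ρ : ℝ → ℂ) (hρ : Integrable ρ ν)
    (t : ℝ) (ht : t ∈ Set.Icc (0 : ℝ) T) :
    μ[fun ω => ∫ u, Complex.exp (Complex.I * u * X T ω) * ρ u ∂ν | ℱ t]
      =ᵐ[μ] fun ω => ∫ u,
        Complex.exp (Complex.I * u * X t ω) * Complex.exp (Ψ T u - Ψ t u) * ρ u ∂ν := by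
  have hX : ∀ s, Measurable (X s) := fun s => (hadapted s).mono (ℱ.le s) le_rfl
  have hZ : Measurable fun ω => X T ω - X t ω := (hX T).sub (hX t)
  have hε : ∀ u, charFun (μ.map fun ω => X T ω - X t ω) u = exp (Ψ T u - Ψ t u) := by
    intro u
    rw [charFun_map_eq_integral_exp hZ.aemeasurable, ← hcharInc t T ht.2]
    simp only [ofReal_sub]
  have h := condExp_integral_exp_add_of_indep (ℱ.le t) (hadapted t) hZ (hindep t T ht.2) hρ
  simpa only [add_sub_cancel, hε] using h

theorem stmt11 {Ω : Type*} {m0 : MeasurableSpace Ω} (μ : Measure Ω) [IsProbabilityMeasure μ]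
    (ℱ : Filtration ℝ m0) (X : ℝ → Ω → ℝ) (Ψ : ℝ → ℝ → ℂ) (T : ℝ)
    (hX0 : ∀ ω, X 0 ω = 0)
    (hadapted : Adapted ℱ X)
    (hmeas : ∀ t, Measurable (X t))
    (hL2 : ∀ t, MemLp (X t) 2 μ)
    (hindep : ∀ s t : ℝ, s ≤ t →
      Indep (MeasurableSpace.comap (fun ω => X t ω - X s ω) inferInstance) (ℱ s) μ)
    (hcharInc : ∀ s t : ℝ, s ≤ t → ∀ u : ℝ,
      ∫ ω, Complex.exp (Complex.I * u * (X t ω - X s ω)) ∂μ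
        = Complex.exp (Ψ t u - Ψ s u))
    -- H = f(X_T) with f the Fourier transform of a finite complex measure ρ dν
    (ν : Measure ℝ) [IsFiniteMeasure ν] (ρ : ℝ → ℂ) (hρ : Integrable ρ ν)
    (t : ℝ) (ht : t ∈ Set.Icc (0 : ℝ) T) :
    μ[fun ω => ∫ u, Complex.exp (Complex.I * u * X T ω) * ρ u ∂ν | ℱ t]
      =ᵐ[μ] fun ω => ∫ u,
        Complex.exp (Complex.I * u * X t ω) * Complex.exp (Ψ T u - Ψ t u) * ρ u ∂ν :=
  stmt11_general μ ℱ X Ψ T hadapted hindep hcharInc ν ρ hρ t ht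
end
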